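/- Let D be a bounded domain in ℂⁿ containing 0, and suppose ζ₁, ζ₂ ∈ D with ε(ζ₁+ζ₂) ∉ D for some ε > 0. If f : D → ℂⁿ is differentiable at 0 with f(0) = 0 and L = f'(0) is such that B(0,c) ⊆ L(D) ⊆ B(0,1), then c ≤ 3ε. -/
import Mathlib


open Metric Set

theorem derivative_obstruction (n : ℕ) (hn : 2 ≤ n)
    (D : Set (EuclideanSpace ℂ (Fin n))) (hDopen : IsOpen D)
    (hDbdd : Bornology.IsBounded D) (h0 : (0 : EuclideanSpace ℂ (Fin n)) ∈ D)
    (ζ₁ ζ₂ : EuclideanSpace ℂ (Fin n)) (hζ₁ : ζ₁ ∈ D) (hζ₂ : ζ₂ ∈ D)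
    (ε : ℝ) (hε : 0 < ε) (hout : (ε : ℂ) • (ζ₁ + ζ₂) ∉ D)
    (f : EuclideanSpace ℂ (Fin n) → EuclideanSpace ℂ (Fin n))
    (hf : DifferentiableAt ℂ f 0) (hf0 : f 0 = 0) (c : ℝ)
    (hc₁ : Metric.ball 0 c ⊆ (fderiv ℂ f 0) '' D)
    (hc₂ : (fderiv ℂ f 0) '' D ⊆ Metric.ball 0 1) :
    c ≤ 3 * ε := by
  by_contra hcon
  push_neg at hcon
  have hc0 : 0 < c := lt_trans (by positivity) hcon
  set L := fderiv ℂ f 0 with hL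
  -- L is surjective
  have hsub : Metric.ball (0 : EuclideanSpace ℂ (Fin n)) c ⊆ LinearMap.range L.toLinearMap := by
    intro x hx
    obtain ⟨w, _, hw⟩ := hc₁ hx
    exact ⟨w, hw⟩
  have hrange : LinearMap.range L.toLinearMap = ⊤ := by
    apply Submodule.eq_top_of_nonempty_interior'
    exact ⟨0, interior_maximal hsub Metric.isOpen_ball (Metric.mem_ball_self hc0)⟩
  have hsurj : Function.Surjective L.toLinearMap := LinearMap.range_eq_top.mp hrange
  have hinj : Function.Injective L.toLinearMap :=
    (LinearMap.injective_iff_surjective).mpr hsurj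
  -- norms of images
  have h1 : ‖L ζ₁‖ < 1 := by
    have := hc₂ ⟨ζ₁, hζ₁, rfl⟩
    simpa [Metric.mem_ball, dist_eq_norm] using this
  have h2 : ‖L ζ₂‖ < 1 := by
    have := hc₂ ⟨ζ₂, hζ₂, rfl⟩
    simpa [Metric.mem_ball, dist_eq_norm] using this
  have hmem : (ε : ℂ) • (L ζ₁ + L ζ₂) ∈ Metric.ball (0 : EuclideanSpace ℂ (Fin n)) c := by
    rw [Metric.mem_ball, dist_zero_right]
    have h3 : ‖(ε : ℂ) • (L ζ₁ + L ζ₂)‖ = ε * ‖L ζ₁ + L ζ₂‖ := by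
      rw [norm_smul]
      simp [abs_of_pos hε]
    rw [h3]
    calc ε * ‖L ζ₁ + L ζ₂‖ ≤ ε * (‖L ζ₁‖ + ‖L ζ₂‖) := by
          exact mul_le_mul_of_nonneg_left (norm_add_le _ _) hε.le
      _ < ε * 3 := by nlinarith
      _ < c := by linarith
  obtain ⟨w, hwD, hw⟩ := hc₁ hmem
  have hweq : L w = L ((ε : ℂ) • (ζ₁ + ζ₂)) := by
    rw [hw, map_smul, map_add]
  have : w = (ε : ℂ) • (ζ₁ + ζ₂) := hinj hweq
  exact hout (this ▸ hwD)
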